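/- Let A ⊆ H be an affine commutative-by-finite Hopf algebra with A semiprime or central in H, or H pointed. Then the restriction map ι° : H° → A° maps the tangential component W(H°) onto A', the irreducible (connected) component of A° containing the counit; that is, ι°(W(H°)) = A' = {f ∈ A° : f((A⁺)ⁿ) = 0 for some n > 0}. -/

import Mathlib

open TensorProduct LinearMap Coalgebra

namespace Paper

noncomputable section

variable (k : Type) [Field k]

section Coalg

variable {C : Type} [AddCommMonoid C] [Module k C] [Coalgebra k C]

/-- Convolution product on the linear dual of a coalgebra. -/
noncomputable def conv (f g : Module.Dual k C) : Module.Dual k C :=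
  (TensorProduct.lid k k).toLinearMap ∘ₗ TensorProduct.map f g ∘ₗ Coalgebra.comul

/-- The unit of the convolution algebra on the dual: the counit. -/
noncomputable def convOne : Module.Dual k C := Coalgebra.counit

/-- Iterated convolution power. -/
noncomputable def convPow (f : Module.Dual k C) : ℕ → Module.Dual k C
  | 0 => convOne k
  | n + 1 => conv k f (convPow f n)

end Coalg

/-- The finite dual of an algebra: functionals vanishing on a two-sided ideal
of finite codimension. -/
def finDual (H : Type) [Ring H] [Algebra k H] : Set (Module.Dual k H) :=
  {f | ∃ I : Submodule k H, (∀ (h : H), ∀ x ∈ I, h * x ∈ I ∧ x * h ∈ I) ∧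
    I ≤ LinearMap.ker f ∧ FiniteDimensional k (H ⧸ I)}

section Hopf

variable (H : Type) [Ring H] [HopfAlgebra k H]

/-- Left adjoint action `(ad_ℓ h)(a) = Σ h₁ a S(h₂)`. -/
noncomputable def adl (h a : H) : H :=
  TensorProduct.lift (((LinearMap.mul k H).comp (LinearMap.mulRight k a)).compl₂
    (HopfAlgebra.antipode (R := k))) (Coalgebra.comul h)

/-- Right adjoint action `(ad_r h)(a) = Σ S(h₁) a h₂`. -/
noncomputable def adr (h a : H) : H :=
  TensorProduct.lift ((LinearMap.mul k H).comp ((LinearMap.mulRight k a) ∘ₗ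
    (HopfAlgebra.antipode (R := k)))) (Coalgebra.comul h)

/-- Left adjoint action on the dual: `(ad_ℓ φ)(f) = Σ φ₁ f S°(φ₂)`, i.e.
`h ↦ Σ φ(h₁ S(h₃)) f(h₂)`. -/
noncomputable def adld (φ f : Module.Dual k H) : Module.Dual k H :=
  (TensorProduct.lid k k).toLinearMap ∘ₗ
    TensorProduct.map (φ ∘ₗ LinearMap.mul' k H ∘ₗ
      (HopfAlgebra.antipode (R := k)).lTensor H) f ∘ₗ
    (TensorProduct.assoc k H H H).symm.toLinearMap ∘ₗ
    ((TensorProduct.comm k H H).toLinearMap.lTensor H) ∘ₗ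
    ((Coalgebra.comul (R := k) (A := H)).lTensor H) ∘ₗ
    Coalgebra.comul

/-- Right adjoint action on the dual: `(ad_r φ)(f) = Σ S°(φ₁) f φ₂`, i.e.
`h ↦ Σ φ(S(h₁) h₃) f(h₂)`. -/
noncomputable def adrd (φ f : Module.Dual k H) : Module.Dual k H :=
  (TensorProduct.lid k k).toLinearMap ∘ₗ
    TensorProduct.map (φ ∘ₗ LinearMap.mul' k H ∘ₗ
      (HopfAlgebra.antipode (R := k)).rTensor H) f ∘ₗ
    (TensorProduct.assoc k H H H).symm.toLinearMap ∘ₗ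
    ((TensorProduct.comm k H H).toLinearMap.lTensor H) ∘ₗ
    ((Coalgebra.comul (R := k) (A := H)).lTensor H) ∘ₗ
    Coalgebra.comul

/-- A submodule is a subcoalgebra if its image under `comul` lies in `V ⊗ V`. -/
def IsSubcoalgebra (V : Submodule k H) : Prop :=
  ∀ x ∈ V, Coalgebra.comul (R := k) x ∈
    LinearMap.range (TensorProduct.map V.subtype V.subtype)

/-- A Hopf algebra is pointed if every simple subcoalgebra is one-dimensional. -/
def IsPointedHopf : Prop :=
  ∀ V : Submodule k H, IsSubcoalgebra k H V → V ≠ ⊥ →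
    (∀ W : Submodule k H, W ≤ V → IsSubcoalgebra k H W → W = ⊥ ∨ W = V) →
    Module.finrank k ↥V = 1

/-- A coideal: `ε(X) = 0` and `Δ(X) ⊆ X ⊗ H + H ⊗ X`. -/
def IsCoideal (X : Submodule k H) : Prop :=
  (∀ x ∈ X, Coalgebra.counit (R := k) x = 0) ∧
  (∀ x ∈ X, Coalgebra.comul (R := k) x ∈
    LinearMap.range (TensorProduct.map X.subtype (LinearMap.id (M := H))) ⊔
    LinearMap.range (TensorProduct.map (LinearMap.id (M := H)) X.subtype))

/-- `S` is a Hopf subalgebra of the finite dual `H°` (with its convolution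
product; closure under the coproduct is expressed in pairing form). -/
def IsHopfSubalgSet (S : Set (Module.Dual k H)) : Prop :=
  S ⊆ finDual k H ∧ convOne k ∈ S ∧
  (∀ f g, f ∈ S → g ∈ S → f + g ∈ S ∧ conv k f g ∈ S) ∧
  (∀ (c : k), ∀ f ∈ S, c • f ∈ S) ∧
  (∀ f ∈ S, f ∘ₗ HopfAlgebra.antipode (R := k) ∈ S) ∧
  (∀ f ∈ S, ∃ (n : ℕ) (s t : Fin n → Module.Dual k H),
    (∀ i, s i ∈ S ∧ t i ∈ S) ∧ ∀ x y : H, f (x * y) = ∑ i, s i x * t i y)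

end Hopf

section Ext

variable (A : Type) [CommRing A] [HopfAlgebra k A]
variable (H : Type) [Ring H] [HopfAlgebra k H]

/-- The submodule `A⁺H` of `H` (image of the augmentation ideal times `H`). -/
def augHIdeal (ι : A →ₗ[k] H) : Submodule k H :=
  Submodule.span k
    {x : H | ∃ (a : A) (h : H), Coalgebra.counit (R := k) a = 0 ∧ x = ι a * h}

/-- The subset of the dual of `H` corresponding to `H̄* = (H/A⁺H)*`:
functionals vanishing on `A⁺H`. -/
def hbarStar (ι : A →ₗ[k] H) : Set (Module.Dual k H) :=
  {f | ∀ x ∈ augHIdeal k A H ι, f x = 0}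

/-- The tangential component `W(H°)`. -/
def tangential (ι : A →ₗ[k] H) : Set (Module.Dual k H) :=
  {f | f ∈ finDual k H ∧ ∃ n : ℕ, 0 < n ∧ ∀ x ∈ (augHIdeal k A H ι) ^ n, f x = 0}

/-- The augmentation ideal of the commutative Hopf algebra `A`. -/
def augIdeal : Ideal A := RingHom.ker (Bialgebra.counitAlgHom k A)

/-- The irreducible component `A'` of `A°` containing the counit:
functionals vanishing on a power of the augmentation ideal. -/
def Aprime : Set (Module.Dual k A) :=
  {f | ∃ n : ℕ, 0 < n ∧ ∀ x ∈ (augIdeal k A) ^ n, f x = 0}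

/-- The Lie algebra `𝔤` of `G_H`: primitive functionals on `A`. -/
def gLie : Set (Module.Dual k A) :=
  {f | f 1 = 0 ∧ ∀ x y : A, f (x * y) =
    f x * Coalgebra.counit (R := k) y + Coalgebra.counit (R := k) x * f y}

/-- An ideal of `A` is `H̄`-stable if it is stable under the (left) adjoint
action of `H` on `A` (which factors through `H̄`). -/
def IsHStable (ι : A →ₗ[k] H) (I : Ideal A) : Prop :=
  ∀ (h : H), ∀ a ∈ I, ∃ b ∈ I, ι b = adl k H h (ι a)

/-- `mc` is the `H̄`-core of `m`: the largest `H̄`-stable ideal of `A`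
contained in `m`. -/
def IsCore (ι : A →ₗ[k] H) (m mc : Ideal A) : Prop :=
  IsHStable k A H ι mc ∧ mc ≤ m ∧
    ∀ I : Ideal A, IsHStable k A H ι I → I ≤ m → I ≤ mc

/-- The submodule `H·J` of `H`, for an ideal `J` of `A`. -/
def leftMul (ι : A →ₗ[k] H) (J : Ideal A) : Submodule k H :=
  Submodule.span k {x : H | ∃ (h : H), ∃ a ∈ J, x = h * ι a}

/-- The submodule `J·H` of `H`, for an ideal `J` of `A`. -/
def rightMul (ι : A →ₗ[k] H) (J : Ideal A) : Submodule k H :=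
  Submodule.span k {x : H | ∃ (h : H), ∃ a ∈ J, x = ι a * h}

/-- The subcoalgebra `ĝ := (H/H m_g^{(H̄)})*` of `H°`, as a submodule of the dual. -/
def ghat (ι : A →ₗ[k] H) (core : Ideal A → Ideal A) (g : A →ₐ[k] k) :
    Submodule k (Module.Dual k H) :=
  (leftMul k A H ι (core (RingHom.ker g))).dualAnnihilator

/-- The character component `k̂G_H` of `H°`. -/
def charComp (ι : A →ₗ[k] H) (core : Ideal A → Ideal A) :
    Set (Module.Dual k H) :=
  {f | ∃ s : Finset (A →ₐ[k] k), s.Nonempty ∧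
    ∀ x ∈ ⨅ g ∈ s, leftMul k A H ι (core (RingHom.ker g)), f x = 0}

/-- Hypothesis (OrbSemi): all orbit algebras `A/m^{(H̄)}` are semisimple. -/
def OrbSemi (core : Ideal A → Ideal A) : Prop :=
  ∀ m : Ideal A, m.IsMaximal → IsSemisimpleRing (A ⧸ core m)

/-- Restriction of functionals along `ι` : the map `ι° : H° → A°`. -/
def iotaDual (ι : A →ₗ[k] H) (f : Module.Dual k H) : Module.Dual k A := f ∘ₗ ι

/-- Coextension of functionals along the projection `Π : H → A`:
the map `Π° : A° → H°`. -/
def PiDual (p : H →ₗ[k] A) (α : Module.Dual k A) : Module.Dual k H := α ∘ₗ p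

/-- `A ⊆ H` is an affine commutative-by-finite Hopf algebra, where the
inclusion of the commutative normal Hopf subalgebra `A` is recorded by the
injective Hopf algebra map `ι`. -/
structure CommByFinite (ι : A →ₗ[k] H) : Prop where
  ι_inj : Function.Injective ι
  ι_one : ι 1 = 1
  ι_mul : ∀ a b : A, ι (a * b) = ι a * ι b
  ι_comul : ∀ a : A,
    Coalgebra.comul (R := k) (ι a) = TensorProduct.map ι ι (Coalgebra.comul a)
  ι_counit : ∀ a : A,
    Coalgebra.counit (R := k) (ι a) = Coalgebra.counit (R := k) a
  ι_antipode : ∀ a : A,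
    ι (HopfAlgebra.antipode (R := k) a) = HopfAlgebra.antipode (R := k) (ι a)
  affine : ∃ s : Finset A, Algebra.adjoin k (s : Set A) = ⊤
  normal_left : ∀ (h : H) (a : A), adl k H h (ι a) ∈ Set.range ι
  normal_right : ∀ (h : H) (a : A), adr k H h (ι a) ∈ Set.range ι
  finiteOver : ∃ s : Finset H,
    Submodule.span k {x : H | ∃ (a : A), ∃ y ∈ s, x = ι a * y} = ⊤

/-- The standing hypothesis: `A` is semiprime (reduced) or central in `H`,
or `H` is pointed. -/
def StandingHyp (ι : A →ₗ[k] H) : Prop :=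
  IsReduced A ∨ (∀ (a : A) (h : H), ι a * h = h * ι a) ∨ IsPointedHopf k H

/-- `Π : H → A` is the projection of a direct sum decomposition
`H = A ⊕ X` of right `A`-modules. -/
structure IsSplitting (ι : A →ₗ[k] H) (p : H →ₗ[k] A) : Prop where
  left_inv : ∀ a : A, p (ι a) = a
  right_linear : ∀ (h : H) (a : A), p (h * ι a) = p h * a

/-- Hypothesis (CoSplit) for a given splitting `Π`: the complement
`X = ker Π` is a coideal of `H`. -/
def CoSplit (p : H →ₗ[k] A) : Prop := IsCoideal k H (LinearMap.ker p)

end Ext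

section Quot

variable (A : Type) [CommRing A] [HopfAlgebra k A]
variable (H : Type) [Ring H] [HopfAlgebra k H]
variable (Hb : Type) [Ring Hb] [HopfAlgebra k Hb]

/-- `π : H → H̄` realises `H̄` as the quotient Hopf algebra `H/A⁺H`. -/
structure IsHbarQuotient (ι : A →ₗ[k] H) (π : H →ₗ[k] Hb) : Prop where
  π_surj : Function.Surjective π
  π_one : π 1 = 1
  π_mul : ∀ x y : H, π (x * y) = π x * π y
  π_comul : ∀ x : H,
    Coalgebra.comul (R := k) (π x) = TensorProduct.map π π (Coalgebra.comul x)
  π_counit : ∀ x : H,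
    Coalgebra.counit (R := k) (π x) = Coalgebra.counit (R := k) x
  π_antipode : ∀ x : H,
    π (HopfAlgebra.antipode (R := k) x) = HopfAlgebra.antipode (R := k) (π x)
  π_ker : LinearMap.ker π = augHIdeal k A H ι
  findim : FiniteDimensional k Hb

/-- Composition with `π` : the map `π° : H̄* → H°`. -/
def piDual (π : H →ₗ[k] Hb) (β : Module.Dual k Hb) : Module.Dual k H := β ∘ₗ π

end Quot

end

end Paper

/-!
Normality of `A` gives `h a = Σ ad(h₁)(a) h₂ ∈ A⁺H` for `a ∈ A⁺`, so `A⁺H` is a two-sided ideal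
and `(A⁺H)ᵐ = (A⁺)ᵐH`. As `H` is a finite module over the Noetherian ring `A` and `A/(A⁺)ᵐ` is
finite-dimensional, these ideals have finite codimension, and restriction maps `W(H°)` into `A'`.
Conversely, Artin–Rees for the submodule `A ⊆ H` gives `A ∩ (A⁺)ᵐH ⊆ (A⁺)ⁿ` for large `m`, so a
functional on `A` killing `(A⁺)ⁿ` factors through `A/(A ∩ (A⁺)ᵐH) ↪ H/(A⁺)ᵐH` and extends to `H`.
-/

section LinearAlgebra

variable {k V W : Type*} [Field k] [AddCommGroup V] [Module k V] [AddCommGroup W] [Module k W]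

theorem Module.Dual.exists_comp_eq_of_comap_le (ι : V →ₗ[k] W) {U : Submodule k W}
    {α : Module.Dual k V} (h : U.comap ι ≤ LinearMap.ker α) :
    ∃ f : Module.Dual k W, U ≤ LinearMap.ker f ∧ f ∘ₗ ι = α := by
  have hα : α ∈ LinearMap.range (U.mkQ ∘ₗ ι).dualMap := by
    rw [LinearMap.range_dualMap_eq_dualAnnihilator_ker, Submodule.mem_dualAnnihilator,
      LinearMap.ker_comp, Submodule.ker_mkQ]
    exact fun v hv => h hv
  obtain ⟨γ, rfl⟩ := hα
  exact ⟨γ ∘ₗ U.mkQ, fun x hx => by simp [(Submodule.Quotient.mk_eq_zero U).mpr hx], rfl⟩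

end LinearAlgebra

section CommutativeAlgebra

variable {k A M : Type*} [CommRing k] [CommRing A] [Algebra k A] [IsNoetherianRing A]
  (I : Ideal A)

theorem Ideal.moduleFinite_quotient_pow [Module.Finite k (A ⧸ I)] (n : ℕ) :
    Module.Finite k (A ⧸ I ^ n) := by
  cases n with
  | zero => rw [pow_zero, Ideal.one_eq_top]; infer_instance
  | succ n =>
    have hle : I ^ (n + 1) ≤ I := Ideal.pow_le_self n.succ_ne_zero
    refine Module.finite_of_surjective_of_ker_le_nilradical (Ideal.Quotient.factorₐ k hle)
      (Ideal.Quotient.factor_surjective hle) (fun x hx => ?_) (IsNoetherian.noetherian _)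
    obtain ⟨a, rfl⟩ := Ideal.Quotient.mk_surjective x
    have ha : a ∈ I := Ideal.Quotient.eq_zero_iff_mem.mp hx
    refine mem_nilradical.mpr ⟨n + 1, ?_⟩
    rw [← map_pow, Ideal.Quotient.eq_zero_iff_mem]
    exact Ideal.pow_mem_pow ha _

variable [AddCommGroup M] [Module A M] [Module.Finite A M]

theorem Submodule.moduleFinite_quotient_pow_smul_top [Module k M] [IsScalarTower k A M]
    [Module.Finite k (A ⧸ I)] (n : ℕ) :
    Module.Finite k (M ⧸ (I ^ n • ⊤ : Submodule A M)) :=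
  have := I.moduleFinite_quotient_pow (k := k) n
  Module.Finite.trans (A ⧸ I ^ n) _

theorem Ideal.exists_pow_smul_top_inf_le (N : Submodule A M) (n : ℕ) :
    ∃ m₀, ∀ m ≥ m₀, I ^ m • ⊤ ⊓ N ≤ I ^ n • N := by
  obtain ⟨c, hc⟩ := I.exists_pow_inf_eq_pow_smul N
  refine ⟨n + c, fun m hm => ?_⟩
  rw [hc m (by omega)]
  exact (smul_mono_right _ inf_le_right).trans
    (Submodule.smul_mono_left (Ideal.pow_le_pow_right (by omega)))

end CommutativeAlgebra

section SubmodulePowers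

variable {k A H : Type*} [CommSemiring k] [Semiring H] [Algebra k H]

theorem Submodule.top_mul_pow_le {J : Submodule k H} (hJ : ⊤ * J ≤ J) {m : ℕ} (hm : m ≠ 0) :
    ⊤ * J ^ m ≤ J ^ m := by
  obtain ⟨n, rfl⟩ := Nat.exists_eq_succ_of_ne_zero hm
  rw [pow_succ', ← mul_assoc]
  exact mul_le_mul_left hJ _

theorem Submodule.pow_mul_top_le {J : Submodule k H} (hJ : J * ⊤ ≤ J) {m : ℕ} (hm : m ≠ 0) :
    J ^ m * ⊤ ≤ J ^ m := by
  obtain ⟨n, rfl⟩ := Nat.exists_eq_succ_of_ne_zero hm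
  rw [pow_succ, mul_assoc]
  exact mul_le_mul_right hJ _

variable [CommRing A] [Algebra k A] [Module A H] [IsScalarTower k A H] [IsScalarTower A H H]

theorem Submodule.restrictScalars_smul_top_pow {I : Ideal A}
    (hI : ∀ (h : H), ∀ x ∈ I • (⊤ : Submodule A H), h * x ∈ I • (⊤ : Submodule A H))
    {m : ℕ} (hm : m ≠ 0) :
    ((I • ⊤ : Submodule A H).restrictScalars k) ^ m =
      (I ^ m • ⊤ : Submodule A H).restrictScalars k := by
  induction m, Nat.one_le_iff_ne_zero.mpr hm using Nat.le_induction with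
  | base => rw [pow_one, pow_one]
  | succ m hm ih =>
    rw [pow_succ, ih (by omega)]
    apply le_antisymm
    · refine Submodule.mul_le.mpr fun x hx y hy => ?_
      rw [Submodule.restrictScalars_mem] at hx hy ⊢
      induction hx using Submodule.smul_induction_on' with
      | smul c hc h _ =>
        rw [smul_mul_assoc, pow_succ, Submodule.mul_smul]
        exact Submodule.smul_mem_smul hc (hI h y hy)
      | add _ _ _ _ h₁ h₂ => rw [add_mul]; exact add_mem h₁ h₂
    · intro x hx
      rw [Submodule.restrictScalars_mem] at hx
      induction hx using Submodule.smul_induction_on' with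
      | smul c hc h _ =>
        rw [pow_succ] at hc
        induction hc using Submodule.mul_induction_on' with
        | mem_mul_mem c₁ hc₁ c₂ hc₂ =>
          rw [mul_smul, ← one_mul (c₂ • h), ← smul_mul_assoc]
          have h₁ : c₁ • (1 : H) ∈ (I ^ m • ⊤ : Submodule A H) :=
            Submodule.smul_mem_smul hc₁ Submodule.mem_top
          have h₂ : c₂ • h ∈ (I • ⊤ : Submodule A H) :=
            Submodule.smul_mem_smul hc₂ Submodule.mem_top
          exact Submodule.mul_mem_mul h₁ h₂
        | add _ _ _ _ h₁ h₂ => rw [add_smul]; exact add_mem h₁ h₂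
      | add _ _ _ _ h₁ h₂ => exact add_mem h₁ h₂

end SubmodulePowers

namespace Paper

section AdjointAction

variable {k H : Type} [Field k] [Ring H] [HopfAlgebra k H]

theorem adl_eq_sum (x : H) {h : H} {ι : Type*} (r : Coalgebra.Repr k h ι) :
    adl k H h x = ∑ i ∈ r.index, r.left i * x * HopfAlgebra.antipode k (r.right i) := by
  simp [adl, ← r.eq, map_sum]

theorem counit_adl (h x : H) :
    counit (R := k) (adl k H h x) = counit (R := k) h * counit (R := k) x := by
  let r := ℛ k h
  have hε : ∑ i ∈ r.index, counit (R := k) (r.left i) * counit (R := k) (r.right i) =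
      counit (R := k) h := by
    simpa using congrArg (counit (R := k)) (Coalgebra.sum_counit_smul r)
  rw [adl_eq_sum x r, map_sum, ← hε, Finset.sum_mul]
  simp only [Bialgebra.counit_mul, HopfAlgebra.counit_antipode]
  exact Finset.sum_congr rfl fun _ _ => mul_right_comm _ _ _

theorem sum_adl_mul (x h : H) {ι : Type*} (r : Coalgebra.Repr k h ι) :
    ∑ i ∈ r.index, adl k H (r.left i) x * r.right i = h * x := by
  let T : H ⊗[k] (H ⊗[k] H) →ₗ[k] H := LinearMap.mul' k H ∘ₗ
    (TensorProduct.lift (LinearMap.mul k H ∘ₗ LinearMap.mulLeft k x ∘ₗ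
      HopfAlgebra.antipode k)).lTensor H
  have hT : ∀ a b c : H, T (a ⊗ₜ (b ⊗ₜ c)) = a * (x * HopfAlgebra.antipode k b * c) := by
    intro a b c; simp [T]
  have hcoassoc := congrArg T (Coalgebra.sum_tmul_tmul_eq r (fun i => ℛ k (r.left i))
    (fun i => ℛ k (r.right i)))
  simp only [map_sum, hT] at hcoassoc
  have hε : ∑ i ∈ r.index, counit (R := k) (r.right i) • r.left i = h := by
    have := congrArg (TensorProduct.rid k H) (Coalgebra.sum_tmul_counit_eq r)
    simpa only [map_sum, TensorProduct.rid_tmul, one_smul] using this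
  calc ∑ i ∈ r.index, adl k H (r.left i) x * r.right i
      = ∑ i ∈ r.index, ∑ j ∈ (ℛ k (r.left i)).index, (ℛ k (r.left i)).left j *
          (x * HopfAlgebra.antipode k ((ℛ k (r.left i)).right j) * r.right i) := by
        simp only [adl_eq_sum x (ℛ k _), Finset.sum_mul, mul_assoc]
    _ = ∑ i ∈ r.index, ∑ j ∈ (ℛ k (r.right i)).index, r.left i *
          (x * HopfAlgebra.antipode k ((ℛ k (r.right i)).left j) * (ℛ k (r.right i)).right j) :=
        hcoassoc
    _ = ∑ i ∈ r.index, r.left i * (x * ∑ j ∈ (ℛ k (r.right i)).index,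
          HopfAlgebra.antipode k ((ℛ k (r.right i)).left j) * (ℛ k (r.right i)).right j) := by
        simp only [Finset.mul_sum, mul_assoc]
    _ = ∑ i ∈ r.index, r.left i * (x * algebraMap k H (counit (R := k) (r.right i))) := by
        simp only [HopfAlgebra.sum_antipode_mul_eq_algebraMap_counit]
    _ = h * x := by
        simp only [← Algebra.commutes, ← Algebra.smul_def, mul_smul_comm, ← hε,
          Finset.sum_mul, smul_mul_assoc]

end AdjointAction

section AugmentationIdeals

variable {k A H : Type} [Field k] [CommRing A] [HopfAlgebra k A] [Ring H] [HopfAlgebra k H]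

instance : Module.Finite k (A ⧸ augIdeal k A) :=
  Module.Finite.equiv (Ideal.quotientKerAlgEquivOfSurjective (f := Bialgebra.counitAlgHom k A)
    fun c => ⟨algebraMap k A c, by simp⟩).symm.toLinearEquiv

theorem mem_augIdeal_iff {a : A} : a ∈ augIdeal k A ↔ counit (R := k) a = 0 :=
  Iff.rfl

theorem augHIdeal_mul_top_le (ι : A →ₗ[k] H) : augHIdeal k A H ι * ⊤ ≤ augHIdeal k A H ι := by
  refine Submodule.mul_le.mpr fun x hx y _ => ?_
  induction hx using Submodule.span_induction with
  | mem x hx =>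
    obtain ⟨a, h, ha, rfl⟩ := hx
    exact Submodule.subset_span ⟨a, h * y, ha, mul_assoc _ _ _⟩
  | zero => simp
  | add _ _ _ _ h₁ h₂ => rw [add_mul]; exact add_mem h₁ h₂
  | smul c _ _ h => rw [smul_mul_assoc]; exact Submodule.smul_mem _ c h

theorem augHIdeal_eq_restrictScalars {ι : A →ₗ[k] H} [Module A H] [IsScalarTower k A H]
    (hsmul : ∀ (a : A) (h : H), a • h = ι a * h) :
    augHIdeal k A H ι = (augIdeal k A • ⊤ : Submodule A H).restrictScalars k := by
  apply le_antisymm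
  · refine Submodule.span_le.mpr ?_
    rintro _ ⟨a, h, ha, rfl⟩
    rw [SetLike.mem_coe, Submodule.restrictScalars_mem, ← hsmul]
    exact Submodule.smul_mem_smul (mem_augIdeal_iff.mpr ha) Submodule.mem_top
  · intro x hx
    rw [Submodule.restrictScalars_mem] at hx
    induction hx using Submodule.smul_induction_on' with
    | smul a ha h _ => exact Submodule.subset_span ⟨a, h, mem_augIdeal_iff.mp ha, hsmul a h⟩
    | add _ _ _ _ h₁ h₂ => exact add_mem h₁ h₂

namespace CommByFinite

variable {ι : A →ₗ[k] H}

theorem isNoetherianRing (hC : CommByFinite k A H ι) : IsNoetherianRing A :=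
  have : Algebra.FiniteType k A := ⟨hC.affine.imp fun _ hs => hs⟩
  Algebra.FiniteType.isNoetherianRing k A

theorem mul_mem_augHIdeal (hC : CommByFinite k A H ι) (h : H) {b : A}
    (hb : counit (R := k) b = 0) : h * ι b ∈ augHIdeal k A H ι := by
  rw [← sum_adl_mul (ι b) h (ℛ k h)]
  refine Submodule.sum_mem _ fun i _ => ?_
  obtain ⟨a, ha⟩ := hC.normal_left ((ℛ k h).left i) b
  refine Submodule.subset_span ⟨a, (ℛ k h).right i, ?_, by rw [ha]⟩
  rw [← hC.ι_counit, ha, counit_adl, hC.ι_counit, hb, mul_zero]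

theorem top_mul_augHIdeal_le (hC : CommByFinite k A H ι) :
    ⊤ * augHIdeal k A H ι ≤ augHIdeal k A H ι := by
  refine Submodule.mul_le.mpr fun h _ x hx => ?_
  induction hx using Submodule.span_induction with
  | mem x hx =>
    obtain ⟨a, h', ha, rfl⟩ := hx
    rw [← mul_assoc]
    exact augHIdeal_mul_top_le ι
      (Submodule.mul_mem_mul (hC.mul_mem_augHIdeal h ha) Submodule.mem_top)
  | zero => simp
  | add _ _ _ _ h₁ h₂ => rw [mul_add]; exact add_mem h₁ h₂
  | smul c _ _ h => rw [mul_smul_comm]; exact Submodule.smul_mem _ c h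

theorem exists_leftModule (hC : CommByFinite k A H ι) :
    ∃ (_ : Module A H) (_ : IsScalarTower k A H), ∀ (a : A) (h : H), a • h = ι a * h := by
  let ιRing : A →+* H :=
    { toFun := ι, map_one' := hC.ι_one, map_mul' := hC.ι_mul, map_zero' := map_zero ι,
      map_add' := map_add ι }
  let : Module A H := Module.compHom H ιRing
  exact ⟨this, ⟨fun c a h => show ι (c • a) * h = c • (ι a * h) by
    rw [map_smul, smul_mul_assoc]⟩, fun _ _ => rfl⟩

theorem moduleFinite (hC : CommByFinite k A H ι) [Module A H] [IsScalarTower k A H]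
    (hsmul : ∀ (a : A) (h : H), a • h = ι a * h) : Module.Finite A H := by
  obtain ⟨t, ht⟩ := hC.finiteOver
  refine ⟨⟨t, eq_top_iff.mpr fun x _ => ?_⟩⟩
  have hle : Submodule.span k {x : H | ∃ (a : A), ∃ y ∈ t, x = ι a * y} ≤
      (Submodule.span A (t : Set H)).restrictScalars k := by
    refine Submodule.span_le.mpr ?_
    rintro _ ⟨a, y, hy, rfl⟩
    rw [← hsmul]
    exact Submodule.smul_mem _ a (Submodule.subset_span hy)
  exact hle (ht ▸ Submodule.mem_top)

theorem augHIdeal_pow_eq (hC : CommByFinite k A H ι) [Module A H] [IsScalarTower k A H]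
    (hsmul : ∀ (a : A) (h : H), a • h = ι a * h) {m : ℕ} (hm : m ≠ 0) :
    augHIdeal k A H ι ^ m = (augIdeal k A ^ m • ⊤ : Submodule A H).restrictScalars k := by
  have : IsScalarTower A H H := ⟨fun a x y => show (a • x) * y = a • (x * y) by
    rw [hsmul, hsmul, mul_assoc]⟩
  have hJ := hC.top_mul_augHIdeal_le
  rw [augHIdeal_eq_restrictScalars hsmul] at hJ ⊢
  exact Submodule.restrictScalars_smul_top_pow
    (fun h x hx => hJ (Submodule.mul_mem_mul Submodule.mem_top hx)) hm

theorem iota_mem_augHIdeal_pow (hC : CommByFinite k A H ι) {n : ℕ} (hn : n ≠ 0) {a : A}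
    (ha : a ∈ augIdeal k A ^ n) : ι a ∈ augHIdeal k A H ι ^ n := by
  obtain ⟨_, _, hsmul⟩ := hC.exists_leftModule
  rw [hC.augHIdeal_pow_eq hsmul hn, Submodule.restrictScalars_mem, ← mul_one (ι a), ← hsmul]
  exact Submodule.smul_mem_smul ha Submodule.mem_top

theorem exists_comap_augHIdeal_pow_le (hC : CommByFinite k A H ι) (n : ℕ) :
    ∃ m ≠ 0, (augHIdeal k A H ι ^ m).comap ι ≤ (augIdeal k A ^ n).restrictScalars k := by
  obtain ⟨_, _, hsmul⟩ := hC.exists_leftModule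
  have := hC.isNoetherianRing
  have := hC.moduleFinite hsmul
  obtain ⟨m₀, hm₀⟩ := (augIdeal k A).exists_pow_smul_top_inf_le (A ∙ (1 : H)) n
  refine ⟨m₀ + 1, m₀.succ_ne_zero, fun a ha => ?_⟩
  rw [Submodule.mem_comap, hC.augHIdeal_pow_eq hsmul m₀.succ_ne_zero] at ha
  have hspan : ι a ∈ A ∙ (1 : H) := Submodule.mem_span_singleton.mpr ⟨a, by rw [hsmul, mul_one]⟩
  obtain ⟨b, hb, hba⟩ := Submodule.mem_smul_span_singleton.mp
    (hm₀ (m₀ + 1) m₀.le_succ ⟨ha, hspan⟩)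
  rw [hsmul, mul_one] at hba
  rwa [← hC.ι_inj hba]

theorem finiteDimensional_quotient_augHIdeal_pow (hC : CommByFinite k A H ι) {m : ℕ}
    (hm : m ≠ 0) : FiniteDimensional k (H ⧸ augHIdeal k A H ι ^ m) := by
  obtain ⟨_, _, hsmul⟩ := hC.exists_leftModule
  have := hC.isNoetherianRing
  have := hC.moduleFinite hsmul
  have := (augIdeal k A).moduleFinite_quotient_pow_smul_top (k := k) (M := H) m
  rw [hC.augHIdeal_pow_eq hsmul hm]
  exact Module.Finite.equiv (Submodule.Quotient.restrictScalarsEquiv k _).symm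

theorem mem_tangential_of_pow_le_ker (hC : CommByFinite k A H ι) {m : ℕ} (hm : m ≠ 0)
    {f : Module.Dual k H} (hf : augHIdeal k A H ι ^ m ≤ LinearMap.ker f) :
    f ∈ tangential k A H ι := by
  refine ⟨⟨_, fun h x hx => ⟨?_, ?_⟩, hf, hC.finiteDimensional_quotient_augHIdeal_pow hm⟩,
    m, Nat.pos_of_ne_zero hm, fun x hx => hf hx⟩
  · exact Submodule.top_mul_pow_le hC.top_mul_augHIdeal_le hm
      (Submodule.mul_mem_mul Submodule.mem_top hx)
  · exact Submodule.pow_mul_top_le (augHIdeal_mul_top_le ι) hm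
      (Submodule.mul_mem_mul hx Submodule.mem_top)

end CommByFinite

end AugmentationIdeals

end Paper

open Paper in
theorem statement_7_general
    (k : Type) [Field k]
    (A : Type) [CommRing A] [HopfAlgebra k A]
    (H : Type) [Ring H] [HopfAlgebra k H]
    (ι : A →ₗ[k] H)
    (hCbF : CommByFinite k A H ι) :
    iotaDual k A H ι '' tangential k A H ι = Aprime k A := by
  ext α
  constructor
  · rintro ⟨f, ⟨-, n, hn, hf⟩, rfl⟩
    exact ⟨n, hn, fun a ha => hf _ (hCbF.iota_mem_augHIdeal_pow hn.ne' ha)⟩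
  · rintro ⟨n, -, hα⟩
    obtain ⟨m, hm, hAR⟩ := hCbF.exists_comap_augHIdeal_pow_le n
    obtain ⟨f, hf, rfl⟩ := Module.Dual.exists_comp_eq_of_comap_le ι fun a ha => hα a (hAR ha)
    exact ⟨f, hCbF.mem_tangential_of_pow_le_ker hm hf, rfl⟩

open Paper in
/-- The restriction map `ι° : H° → A°` maps the tangential
component `W(H°)` onto `A' = {f ∈ A° : f((A⁺)ⁿ) = 0 for some n > 0}`, the
irreducible component of `A°` containing the counit. -/
theorem statement_7
    (k : Type) [Field k] [IsAlgClosed k]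
    (A : Type) [CommRing A] [HopfAlgebra k A]
    (H : Type) [Ring H] [HopfAlgebra k H]
    (ι : A →ₗ[k] H)
    (hCbF : CommByFinite k A H ι)
    (hyp : StandingHyp k A H ι) :
    iotaDual k A H ι '' tangential k A H ι = Aprime k A :=
  statement_7_general k A H ι hCbF
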